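/- Let 0 < p < 1 be a real number, let N ≥ 3, and let r : {1,…,N} → ℝ be nondecreasing (r₁ ≤ r₂ ≤ ⋯ ≤ r_N). For a permutation σ of {1,…,N}, define the Hamiltonian-cycle cost E(σ) = Σ_{i=1}^{N} |r_{σ(i+1)} − r_{σ(i)}|^p, where indices are taken cyclically (σ(N+1) := σ(1)). Then for every permutation σ, E(σ) ≥ Σ_{i=1}^{N−1} (r_{i+1} − r_i)^p + (r_N − r_1)^p; that is, the cycle visiting the points in increasing order and returning from the last point to the first is an optimal traveling-salesman tour on the complete graph with weights |r_i − r_j|^p. -/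

import Mathlib

/-!
Remove the largest point `x` from a tour. In the increasing cycle its neighbours are the
second largest point `y` and the smallest point `d`; in an arbitrary tour they are some `a ≤ c`
in `[d, y]`. Reinserting `x` costs `w(y,x) + w(x,d) - w(y,d)` in the first case and
`w(a,x) + w(x,c) - w(a,c)` in the second, and for `w(u,v) = f |v - u|` with `f` concave and
nondecreasing on `[0, ∞)` the first is never larger: `f (x - y) ≤ f (x - c)` and
`f (c - a) ≤ f (y - a)` by monotonicity, and `f (x - d) - f (y - d) ≤ f (x - a) - f (y - a)`
by concavity. Induction on the number of points finishes the proof, with `f = (· ^ p)`.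
-/

open Set

section AddCommMonoid

variable {α β : Type*} [AddCommMonoid β] (w : α → α → β)

def pathCost : List α → β
  | [] => 0
  | [_] => 0
  | a :: b :: t => w a b + pathCost (b :: t)

def cycleCost : List α → β
  | [] => 0
  | a :: t => pathCost w (a :: t) + w (t.getLastD a) a

theorem pathCost_concat (a x : α) (l : List α) :
    pathCost w (a :: l ++ [x]) = pathCost w (a :: l) + w (l.getLastD a) x := by
  induction l generalizing a with
  | nil => simp [pathCost]
  | cons b l ih =>
    simp only [List.cons_append, pathCost, List.getLastD_cons] at ih ⊢
    rw [ih, add_assoc]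

theorem cycleCost_rotate_one (l : List α) : cycleCost w (l.rotate 1) = cycleCost w l := by
  rcases l with _ | ⟨a, _ | ⟨b, t⟩⟩
  · rfl
  · simp
  · rw [List.rotate_cons_succ, List.rotate_zero, List.cons_append, cycleCost, cycleCost,
      ← List.cons_append, pathCost_concat, pathCost, List.getLastD_concat, List.getLastD_cons]
    abel

theorem cycleCost_rotate (l : List α) (k : ℕ) : cycleCost w (l.rotate k) = cycleCost w l := by
  induction k with
  | zero => rw [List.rotate_zero]
  | succ k ih => rw [← List.rotate_rotate, cycleCost_rotate_one, ih]

theorem cycleCost_append_comm (s t : List α) :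
    cycleCost w (s ++ t) = cycleCost w (t ++ s) := by
  rw [← List.rotate_append_length_eq, cycleCost_rotate]

theorem pathCost_ofFn {n : ℕ} (g : Fin (n + 1) → α) :
    pathCost w (List.ofFn g) = ∑ i : Fin n, w (g i.castSucc) (g i.succ) := by
  induction n with
  | zero => simp [pathCost]
  | succ n ih =>
    have h := ih (fun i => g i.succ)
    rw [List.ofFn_succ] at h
    rw [List.ofFn_succ, List.ofFn_succ, pathCost, h, Fin.sum_univ_succ]
    rfl

theorem cycleCost_ofFn {n : ℕ} (g : Fin (n + 1) → α) :
    cycleCost w (List.ofFn g) =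
      ∑ i : Fin n, w (g i.castSucc) (g i.succ) + w (g (Fin.last n)) (g 0) := by
  have hlast : (List.ofFn fun i : Fin n => g i.succ).getLastD (g 0) = g (Fin.last n) := by
    rw [← List.getLast_eq_getLastD (List.cons_ne_nil _ _)]
    simp_rw [← List.ofFn_succ, List.getLast_ofFn]
    rfl
  rw [← pathCost_ofFn, List.ofFn_succ, cycleCost, hlast]

end AddCommMonoid

section AddCommGroup

variable {α β : Type*} [AddCommGroup β] (w : α → α → β)

def insertCost (a x c : α) : β := w a x + w x c - w a c

theorem cycleCost_cons_cons (x a : α) (t : List α) :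
    cycleCost w (x :: a :: t) = cycleCost w (a :: t) + insertCost w (t.getLastD a) x a := by
  simp only [cycleCost, pathCost, List.getLastD_cons, insertCost]
  abel

end AddCommGroup

theorem List.Pairwise.le_getLastD {α : Type*} [Preorder α] {d e : α} {l : List α}
    (hl : (d :: l).Pairwise (· ≤ ·)) (he : e ∈ d :: l) : e ≤ l.getLastD d := by
  induction l generalizing d with
  | nil => simp_all
  | cons c l ih =>
    rw [List.getLastD_cons]
    rcases List.mem_cons.1 he with rfl | he
    · exact List.rel_of_pairwise_cons hl List.getLastD_mem_cons
    · exact ih hl.of_cons he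

theorem ConcaveOn.add_le_add_of_add_eq {𝕜 : Type*} [Field 𝕜] [LinearOrder 𝕜]
    [IsStrictOrderedRing 𝕜] {s : Set 𝕜} {f : 𝕜 → 𝕜} (hf : ConcaveOn 𝕜 s f) {a b c d : 𝕜}
    (ha : a ∈ s) (hd : d ∈ s) (hab : a ≤ b) (hbd : b ≤ d) (h : b + c = a + d) :
    f a + f d ≤ f b + f c := by
  obtain rfl : c = a + d - b := by linear_combination h
  rcases (hab.trans hbd).eq_or_lt with had | had
  · obtain rfl : b = a := le_antisymm (had ▸ hbd) hab
    rw [add_sub_cancel_left]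
  have hda : 0 < d - a := sub_pos.2 had
  have hs : 0 ≤ (d - b) / (d - a) := div_nonneg (sub_nonneg.2 hbd) hda.le
  have ht : 0 ≤ (b - a) / (d - a) := div_nonneg (sub_nonneg.2 hab) hda.le
  have hst : (d - b) / (d - a) + (b - a) / (d - a) = 1 := by field
  have hb := hf.2 ha hd hs ht hst
  have hc := hf.2 ha hd ht hs (by rw [add_comm, hst])
  simp only [smul_eq_mul] at hb hc
  rw [show (d - b) / (d - a) * a + (b - a) / (d - a) * d = b by field] at hb
  rw [show (b - a) / (d - a) * a + (d - b) / (d - a) * d = a + d - b by field] at hc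
  linear_combination hb + hc - (f a + f d) * hst

theorem insertCost_le_of_concaveOn {f : ℝ → ℝ} (hf : ConcaveOn ℝ (Ici 0) f) (hf' : MonotoneOn f (Ici 0))
    {d a c y x : ℝ} (hda : d ≤ a) (hdc : d ≤ c) (hay : a ≤ y)
    (hcy : c ≤ y) (hyx : y ≤ x) :
    insertCost (fun u v => f |v - u|) y x d ≤ insertCost (fun u v => f |v - u|) a x c := by
  wlog hac : a ≤ c generalizing a c
  · have := this hdc hda hcy hay (le_of_not_ge hac)
    simp only [insertCost, abs_sub_comm a c, abs_sub_comm a x, abs_sub_comm c x] at this ⊢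
    linarith
  simp only [insertCost, abs_sub_comm d x, abs_sub_comm d y, abs_sub_comm c x]
  simp only [abs_of_nonneg, sub_nonneg, hyx, hac, hda.trans (hay.trans hyx), hda.trans hay,
    hay.trans hyx, hcy.trans hyx]
  have hxy : f (x - y) ≤ f (x - c) :=
    hf' (sub_nonneg.2 hyx) (sub_nonneg.2 (hcy.trans hyx)) (by linarith)
  have hxd : f (y - a) + f (x - d) ≤ f (y - d) + f (x - a) :=
    hf.add_le_add_of_add_eq (sub_nonneg.2 hay) (sub_nonneg.2 (hda.trans (hay.trans hyx)))
      (by linarith) (by linarith) (by ring)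
  have hca : f (c - a) ≤ f (y - a) :=
    hf' (sub_nonneg.2 hac) (sub_nonneg.2 hay) (by linarith)
  linarith

theorem cycleCost_le_of_perm_of_pairwise {f : ℝ → ℝ} (hf : ConcaveOn ℝ (Ici 0) f)
    (hf' : MonotoneOn f (Ici 0)) {m l : List ℝ} (hm : m.Pairwise (· ≤ ·))
    (hl : l.Perm m) :
    cycleCost (fun u v => f |v - u|) m ≤ cycleCost (fun u v => f |v - u|) l := by
  induction m using List.reverseRecOn generalizing l with
  | nil => rw [List.perm_nil.1 hl]
  | append_singleton m x ih =>
    rcases m with _ | ⟨d, m⟩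
    · rw [List.nil_append] at hl ⊢
      rw [List.perm_singleton.1 hl]
    obtain ⟨hdm, -, hx⟩ := List.pairwise_append.1 hm
    obtain ⟨s, t, rfl⟩ := List.append_of_mem (hl.symm.subset (List.mem_concat_self ..))
    obtain ⟨c, u, hcu⟩ : ∃ c u, t ++ s = c :: u := by
      refine List.exists_cons_of_ne_nil fun h => ?_
      obtain ⟨rfl, rfl⟩ := List.append_eq_nil_iff.1 h
      simpa using hl.length_eq
    have hperm : (c :: u).Perm (d :: m) := by
      refine List.Perm.cons_inv (a := x) ?_
      rw [← hcu, ← List.cons_append]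
      exact List.perm_append_comm.trans (hl.trans (List.perm_append_singleton _ _))
    have hbounds : ∀ e ∈ c :: u, d ≤ e ∧ e ≤ m.getLastD d := fun e he =>
      have he := hperm.subset he
      ⟨(List.mem_cons.1 he).elim ge_of_eq (List.rel_of_pairwise_cons hdm),
        hdm.le_getLastD he⟩
    rw [cycleCost_append_comm, cycleCost_append_comm _ s, List.singleton_append,
      List.cons_append, hcu, cycleCost_cons_cons, cycleCost_cons_cons]
    exact add_le_add (ih hdm hperm) (insertCost_le_of_concaveOn hf hf'
      (hbounds _ List.getLastD_mem_cons).1 (hbounds _ List.mem_cons_self).1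
      (hbounds _ List.getLastD_mem_cons).2 (hbounds _ List.mem_cons_self).2
      (hx _ List.getLastD_mem_cons _ (List.mem_singleton_self x)))

/-- For `0 < p < 1` and ordered points `r 0 ≤ r 1 ≤ ⋯ ≤ r (N-1)` on the line, the
Hamiltonian cycle visiting the points in increasing order (and returning from the last
point to the first) is an optimal traveling-salesman tour for weights `|rᵢ - rⱼ|^p`. -/
theorem stmt_5 (N : ℕ) (hN : 3 ≤ N) (p : ℝ) (hp0 : 0 < p) (hp1 : p < 1)
    (r : Fin N → ℝ) (hr : Monotone r) (σ : Equiv.Perm (Fin N)) :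
    (∑ i : Fin (N - 1), (r ⟨i.1 + 1, by have := i.2; omega⟩ - r ⟨i.1, by have := i.2; omega⟩) ^ p)
        + (r ⟨N - 1, by omega⟩ - r ⟨0, by omega⟩) ^ p
    ≤ ∑ i : Fin N, |r (σ ⟨(i.1 + 1) % N, Nat.mod_lt _ (by omega)⟩) - r (σ i)| ^ p := by
  obtain ⟨n, rfl⟩ : ∃ n, N = n + 1 := ⟨N - 1, by omega⟩
  have h := cycleCost_le_of_perm_of_pairwise (Real.concaveOn_rpow hp0.le hp1.le)
    (Real.monotoneOn_rpow_Ici_of_exponent_nonneg hp0.le)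
    (List.pairwise_ofFn.2 fun _ _ hij => hr hij.le) (σ.ofFn_comp_perm r)
  rw [cycleCost_ofFn, cycleCost_ofFn] at h
  simp only [Function.comp_apply] at h
  have hsucc (i : Fin n) :
      (⟨(i.castSucc.1 + 1) % (n + 1), Nat.mod_lt _ n.succ_pos⟩ : Fin (n + 1)) = i.succ := by
    ext
    simp [Nat.mod_eq_of_lt]
  have hlast : (⟨((Fin.last n).1 + 1) % (n + 1), Nat.mod_lt _ n.succ_pos⟩ : Fin (n + 1)) = 0 := by
    ext
    simp
  convert h using 2
  · refine Finset.sum_congr rfl fun i _ => ?_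
    rw [abs_of_nonneg (sub_nonneg.2 (hr Fin.castSucc_lt_succ.le))]
    rfl
  · rw [abs_sub_comm, abs_of_nonneg (sub_nonneg.2 (hr (Fin.zero_le _)))]
    rfl
  · simp only [Fin.sum_univ_castSucc, hsucc, hlast]
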